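/- arXiv:1309.2031 — 2 statements merged into one kernel-verified Lean document; each statement's English description precedes it below -/
import Mathlib

section
/- The gradient of the objective function f is block-coordinate-wise Lipschitz continuous with constants L_i = 4(|A_i| + |B_i|): for every i ∈ {1,…,n}, every configuration (x_1,…,x_n) and every y_i ∈ ℝ^d, ‖∇_i f(x_1,…,x_{i−1}, y_i, x_{i+1},…,x_n) − ∇_i f(x_1,…,x_{i−1}, x_i, x_{i+1},…,x_n)‖ ≤ 4(|A_i| + |B_i|) ‖y_i − x_i‖. -/
/-!
Write `ψ_r(v) = max (‖v‖ - r) 0 ^ 2` for the squared distance from `v` to the ball of radius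
`r ≥ 0`. Up to an additive constant, the `i`-th block of `f` is
`z ↦ ∑_{j ∈ A_i} ψ_{d̂_ij}(z - a_j) + ∑_{q ∈ B_i} ψ_{l̂_iq}(z - x_q)`: by the symmetry of `B`
and `l̂` the two occurrences of each pair `{i, q}` in the second sum of `f` cancel its factor `1/2`.
The gradient of `ψ_r` is `2 (v - P_r v)`, `P_r` the projection onto the ball, and firm
nonexpansiveness of `P_r` makes it `2`-Lipschitz; summing gives the constant `2 (|A_i| + |B_i|)`.
-/

open Finset Filter

noncomputable def obj {d n : ℕ} {J : Type*} (a : J → EuclideanSpace ℝ (Fin d))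
    (A : Fin n → Finset J) (dhat : Fin n → J → ℝ)
    (B : Fin n → Finset (Fin n)) (lhat : Fin n → Fin n → ℝ)
    (x : Fin n → EuclideanSpace ℝ (Fin d)) : ℝ :=
  (∑ i, ∑ j ∈ A i, max (‖x i - a j‖ - dhat i j) 0 ^ 2)
    + (1 / 2) * ∑ i, ∑ q ∈ B i, max (‖x i - x q‖ - lhat i q) 0 ^ 2

/-- Partial gradient of `f` with respect to the `i`-th block. -/
noncomputable def blockGrad {d n : ℕ} (f : (Fin n → EuclideanSpace ℝ (Fin d)) → ℝ)
    (i : Fin n) (x : Fin n → EuclideanSpace ℝ (Fin d)) : EuclideanSpace ℝ (Fin d) :=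
  gradient (fun y => f (Function.update x i y)) (x i)

open RealInnerProductSpace Topology

section Gradient

variable {F : Type*} [NormedAddCommGroup F] [InnerProductSpace ℝ F] [CompleteSpace F]
  {f g : F → ℝ} {f' g' x : F}

theorem HasGradientAt.add (hf : HasGradientAt f f' x) (hg : HasGradientAt g g' x) :
    HasGradientAt (fun y => f y + g y) (f' + g') x := by
  rw [hasGradientAt_iff_hasFDerivAt, map_add]
  exact (hasGradientAt_iff_hasFDerivAt.1 hf).add (hasGradientAt_iff_hasFDerivAt.1 hg)

theorem HasGradientAt.add_const (hf : HasGradientAt f f' x) (c : ℝ) :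
    HasGradientAt (fun y => f y + c) f' x :=
  hasGradientAt_iff_hasFDerivAt.2 ((hasGradientAt_iff_hasFDerivAt.1 hf).add_const c)

theorem HasGradientAt.fun_sum {ι : Type*} {s : Finset ι} {f : ι → F → ℝ} {f' : ι → F}
    (h : ∀ k ∈ s, HasGradientAt (f k) (f' k) x) :
    HasGradientAt (fun y => ∑ k ∈ s, f k y) (∑ k ∈ s, f' k) x := by
  rw [hasGradientAt_iff_hasFDerivAt, map_sum]
  exact HasFDerivAt.fun_sum fun k hk => hasGradientAt_iff_hasFDerivAt.1 (h k hk)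

theorem hasGradientAt_of_abs_sub_sub_inner_le {C : ℝ}
    (h : ∀ y, |f y - f x - ⟪f', y - x⟫| ≤ C * ‖y - x‖ ^ 2) : HasGradientAt f f' x := by
  rw [hasGradientAt_iff_isLittleO]
  have hsq : (fun y => ‖y - x‖ ^ 2) =o[𝓝 x] fun y => y - x :=
    (Asymptotics.isLittleO_norm_pow_id one_lt_two).comp_tendsto
      (tendsto_sub_nhds_zero_iff.2 tendsto_id)
  refine (Asymptotics.IsBigO.of_bound C (Eventually.of_forall fun y => ?_)).trans_isLittleO hsq
  simpa using h y

end Gradient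

section BallProjection

variable {E : Type*} [NormedAddCommGroup E] [InnerProductSpace ℝ E] {r : ℝ}

/-- The nearest point of the closed ball `closedBall 0 r` to `v` (for `0 ≤ r`). -/
noncomputable def ballProj (r : ℝ) (v : E) : E :=
  if ‖v‖ ≤ r then v else (r / ‖v‖) • v

/-- The squared distance from `v` to `closedBall 0 r` (for `0 ≤ r`). -/
noncomputable def ballDistSq (r : ℝ) (v : E) : ℝ :=
  max (‖v‖ - r) 0 ^ 2

noncomputable def gradBallDistSq (r : ℝ) (v : E) : E :=
  (2 : ℝ) • (v - ballProj r v)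

theorem ballProj_of_not_le {v : E} (hr : 0 ≤ r) (hv : ¬‖v‖ ≤ r) :
    0 < ‖v‖ ∧ ballProj r v = (r / ‖v‖) • v ∧ v - ballProj r v = (1 - r / ‖v‖) • v := by
  have hpos : 0 < ‖v‖ := hr.trans_lt (not_le.1 hv)
  refine ⟨hpos, if_neg hv, ?_⟩
  rw [ballProj, if_neg hv, sub_smul, one_smul]

theorem norm_ballProj_le (hr : 0 ≤ r) (v : E) : ‖ballProj r v‖ ≤ r := by
  by_cases hv : ‖v‖ ≤ r
  · rwa [ballProj, if_pos hv]
  obtain ⟨hpos, hP, -⟩ := ballProj_of_not_le hr hv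
  rw [hP, norm_smul, Real.norm_of_nonneg (div_nonneg hr hpos.le), div_mul_cancel₀ _ hpos.ne']

theorem norm_sub_ballProj (hr : 0 ≤ r) (v : E) : ‖v - ballProj r v‖ = max (‖v‖ - r) 0 := by
  by_cases hv : ‖v‖ ≤ r
  · simp [ballProj, hv]
  obtain ⟨hpos, -, hsub⟩ := ballProj_of_not_le hr hv
  have hcoef : 0 ≤ 1 - r / ‖v‖ := by rw [sub_nonneg, div_le_one hpos]; exact (not_le.1 hv).le
  rw [hsub, norm_smul, Real.norm_of_nonneg hcoef, max_eq_left (by linarith [not_le.1 hv])]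
  field_simp

theorem ballDistSq_eq_norm_sq (hr : 0 ≤ r) (v : E) :
    ballDistSq r v = ‖v - ballProj r v‖ ^ 2 := by
  rw [ballDistSq, norm_sub_ballProj hr]

/-- The variational inequality characterising the projection onto a convex set. -/
theorem inner_sub_ballProj_nonpos (hr : 0 ≤ r) (v : E) {z : E} (hz : ‖z‖ ≤ r) :
    ⟪v - ballProj r v, z - ballProj r v⟫ ≤ 0 := by
  by_cases hv : ‖v‖ ≤ r
  · simp [ballProj, hv]
  obtain ⟨hpos, hP, hsub⟩ := ballProj_of_not_le hr hv
  have hcoef : 0 ≤ 1 - r / ‖v‖ := by rw [sub_nonneg, div_le_one hpos]; exact (not_le.1 hv).le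
  have hvz : ⟪v, z⟫ ≤ ‖v‖ * r :=
    (real_inner_le_norm v z).trans (mul_le_mul_of_nonneg_left hz hpos.le)
  have hvP : ⟪v, ballProj r v⟫ = ‖v‖ * r := by
    rw [hP, real_inner_smul_right, real_inner_self_eq_norm_sq]
    field_simp
  rw [hsub, real_inner_smul_left, inner_sub_right, hvP]
  exact mul_nonpos_of_nonneg_of_nonpos hcoef (by linarith)

theorem add_inner_le_ballDistSq (hr : 0 ≤ r) (v w : E) :
    ballDistSq r v + ⟪gradBallDistSq r v, w - v⟫ ≤ ballDistSq r w := by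
  set a := v - ballProj r v
  set b := w - ballProj r w
  have hobtuse : ⟪a, ballProj r w - ballProj r v⟫ ≤ 0 :=
    inner_sub_ballProj_nonpos hr v (norm_ballProj_le hr w)
  have hwv : w - v = b - a + (ballProj r w - ballProj r v) := by simp only [a, b]; abel
  have hexp : ‖b - a‖ ^ 2 = ‖b‖ ^ 2 - 2 * ⟪b, a⟫ + ‖a‖ ^ 2 := norm_sub_sq_real b a
  rw [ballDistSq_eq_norm_sq hr, ballDistSq_eq_norm_sq hr, gradBallDistSq, real_inner_smul_left,
    hwv, inner_add_right, inner_sub_right, real_inner_self_eq_norm_sq, real_inner_comm b a]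
  nlinarith [sq_nonneg ‖b - a‖]

theorem ballDistSq_le_add_inner_add (hr : 0 ≤ r) (v w : E) :
    ballDistSq r w ≤ ballDistSq r v + ⟪gradBallDistSq r v, w - v⟫ + ‖w - v‖ ^ 2 := by
  set p := ballProj r v
  have hdist : max (‖w‖ - r) 0 ≤ ‖w - p‖ :=
    max_le (by linarith [norm_sub_norm_le w p, norm_ballProj_le hr v]) (norm_nonneg _)
  have hexp : ‖v - p + (w - v)‖ ^ 2 = ‖v - p‖ ^ 2 + 2 * ⟪v - p, w - v⟫ + ‖w - v‖ ^ 2 :=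
    norm_add_sq_real _ _
  rw [sub_add_sub_cancel'] at hexp
  rw [ballDistSq, ballDistSq_eq_norm_sq hr, gradBallDistSq, real_inner_smul_left, ← hexp]
  exact pow_le_pow_left₀ (le_max_right _ _) hdist 2

/-- Firm nonexpansiveness of the projection. -/
theorem norm_sub_ballProj_sub_sub_ballProj_le (hr : 0 ≤ r) (v w : E) :
    ‖(w - ballProj r w) - (v - ballProj r v)‖ ≤ ‖w - v‖ := by
  set a := v - ballProj r v
  set b := w - ballProj r w
  have h₁ : ⟪a, ballProj r w - ballProj r v⟫ ≤ 0 :=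
    inner_sub_ballProj_nonpos hr v (norm_ballProj_le hr w)
  have h₂ : ⟪b, ballProj r v - ballProj r w⟫ ≤ 0 :=
    inner_sub_ballProj_nonpos hr w (norm_ballProj_le hr v)
  have hwv : w - v = b - a + (ballProj r w - ballProj r v) := by simp only [a, b]; abel
  have hexp : ‖w - v‖ ^ 2 = ‖b - a‖ ^ 2 + 2 * ⟪b - a, ballProj r w - ballProj r v⟫
      + ‖ballProj r w - ballProj r v‖ ^ 2 := by
    rw [hwv, norm_add_sq_real]
  have hcross : ⟪b - a, ballProj r w - ballProj r v⟫ = -⟪b, ballProj r v - ballProj r w⟫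
      - ⟪a, ballProj r w - ballProj r v⟫ := by
    simp only [inner_sub_left, inner_sub_right]; ring
  refine (pow_le_pow_iff_left₀ (norm_nonneg _) (norm_nonneg _) two_ne_zero).1 ?_
  nlinarith [sq_nonneg ‖ballProj r w - ballProj r v‖]

theorem norm_gradBallDistSq_sub_le (hr : 0 ≤ r) (v w : E) :
    ‖gradBallDistSq r w - gradBallDistSq r v‖ ≤ 2 * ‖w - v‖ := by
  rw [gradBallDistSq, gradBallDistSq, ← smul_sub, norm_smul, Real.norm_two]
  exact mul_le_mul_of_nonneg_left (norm_sub_ballProj_sub_sub_ballProj_le hr v w) zero_le_two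

end BallProjection

section SumBallDistSq

variable {E : Type*} [NormedAddCommGroup E] [InnerProductSpace ℝ E] {r : ℝ}

theorem abs_ballDistSq_sub_sub_inner_le (hr : 0 ≤ r) (v w : E) :
    |ballDistSq r w - ballDistSq r v - ⟪gradBallDistSq r v, w - v⟫| ≤ ‖w - v‖ ^ 2 := by
  have hlow := add_inner_le_ballDistSq hr v w
  have hup := ballDistSq_le_add_inner_add hr v w
  rw [abs_le]
  constructor <;> nlinarith [sq_nonneg ‖w - v‖]

variable {κ : Type*} {s : Finset κ} {radius : κ → ℝ}

theorem norm_sum_gradBallDistSq_sub_sub_le (hr : ∀ k ∈ s, 0 ≤ radius k) (c : κ → E) (v w : E) :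
    ‖∑ k ∈ s, gradBallDistSq (radius k) (w - c k) - ∑ k ∈ s, gradBallDistSq (radius k) (v - c k)‖
      ≤ 2 * s.card * ‖w - v‖ := by
  rw [← sum_sub_distrib]
  calc _ ≤ ∑ k ∈ s, ‖gradBallDistSq (radius k) (w - c k) - gradBallDistSq (radius k) (v - c k)‖ :=
        norm_sum_le _ _
    _ ≤ ∑ _k ∈ s, 2 * ‖w - v‖ := sum_le_sum fun k hk => by
        simpa using norm_gradBallDistSq_sub_le (hr k hk) (v - c k) (w - c k)
    _ = 2 * s.card * ‖w - v‖ := by rw [sum_const, nsmul_eq_mul]; ring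

variable [CompleteSpace E]

theorem hasGradientAt_ballDistSq_sub (hr : 0 ≤ r) (c v : E) :
    HasGradientAt (fun w => ballDistSq r (w - c)) (gradBallDistSq r (v - c)) v :=
  hasGradientAt_of_abs_sub_sub_inner_le (C := 1) fun w => by
    simpa [sub_sub_sub_cancel_right] using abs_ballDistSq_sub_sub_inner_le hr (v - c) (w - c)

theorem hasGradientAt_sum_ballDistSq_sub (hr : ∀ k ∈ s, 0 ≤ radius k) (c : κ → E) (v : E) :
    HasGradientAt (fun w => ∑ k ∈ s, ballDistSq (radius k) (w - c k))
      (∑ k ∈ s, gradBallDistSq (radius k) (v - c k)) v :=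
  HasGradientAt.fun_sum fun k hk => hasGradientAt_ballDistSq_sub (hr k hk) (c k) v

end SumBallDistSq

theorem sum_sum_eq_sum_add_sum_erase {ι M : Type*} [Fintype ι] [DecidableEq ι] [AddCommMonoid M]
    {B : ι → Finset ι} (hBirr : ∀ i, i ∉ B i) (hBsymm : ∀ i q, q ∈ B i ↔ i ∈ B q)
    (F : ι → ι → M) (i : ι) :
    ∑ k, ∑ q ∈ B k, F k q
      = ∑ q ∈ B i, (F i q + F q i) + ∑ k ∈ univ.erase i, ∑ q ∈ (B k).erase i, F k q := by
  have hsplit : ∀ k, ∑ q ∈ B k, F k q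
      = (if i ∈ B k then F k i else 0) + ∑ q ∈ (B k).erase i, F k q := by
    intro k
    split_ifs with h
    · exact (add_sum_erase _ _ h).symm
    · rw [erase_eq_of_notMem h, zero_add]
  have hfilter : univ.filter (fun k => i ∈ B k) = B i := by ext; simp [hBsymm i]
  rw [sum_congr rfl fun k _ => hsplit k, sum_add_distrib, ← sum_filter, hfilter,
    ← add_sum_erase univ _ (mem_univ i), erase_eq_of_notMem (hBirr i), sum_add_distrib]
  abel

theorem exists_obj_update_eq {d n : ℕ} {J : Type*} (a : J → EuclideanSpace ℝ (Fin d))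
    (A : Fin n → Finset J) (dhat : Fin n → J → ℝ)
    (B : Fin n → Finset (Fin n)) (lhat : Fin n → Fin n → ℝ)
    (hBirr : ∀ i : Fin n, i ∉ B i) (hBsymm : ∀ i q : Fin n, q ∈ B i ↔ i ∈ B q)
    (hlsymm : ∀ i q : Fin n, lhat i q = lhat q i)
    (i : Fin n) (x : Fin n → EuclideanSpace ℝ (Fin d)) :
    ∃ C, ∀ z, obj a A dhat B lhat (Function.update x i z)
      = ∑ j ∈ A i, ballDistSq (dhat i j) (z - a j) + ∑ q ∈ B i, ballDistSq (lhat i q) (z - x q)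
        + C := by
  refine ⟨∑ k ∈ univ.erase i, ∑ j ∈ A k, ballDistSq (dhat k j) (x k - a j)
    + (1 / 2) * ∑ k ∈ univ.erase i, ∑ q ∈ (B k).erase i, ballDistSq (lhat k q) (x k - x q),
    fun z => ?_⟩
  set u := Function.update x i z
  have hui : u i = z := Function.update_self i z x
  have huk : ∀ k ∈ univ.erase i, u k = x k :=
    fun k hk => Function.update_of_ne (ne_of_mem_erase hk) z x
  have hpair : ∀ q ∈ B i, ballDistSq (lhat i q) (u i - u q) + ballDistSq (lhat q i) (u q - u i)
      = 2 * ballDistSq (lhat i q) (z - x q) := by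
    intro q hq
    rw [huk q (mem_erase.2 ⟨ne_of_mem_of_not_mem hq (hBirr i), mem_univ q⟩), hui, ← hlsymm,
      ballDistSq, ballDistSq, norm_sub_rev]
    ring
  have hfarA : ∑ k ∈ univ.erase i, ∑ j ∈ A k, ballDistSq (dhat k j) (u k - a j)
      = ∑ k ∈ univ.erase i, ∑ j ∈ A k, ballDistSq (dhat k j) (x k - a j) :=
    sum_congr rfl fun k hk => by rw [huk k hk]
  have hfarB : ∑ k ∈ univ.erase i, ∑ q ∈ (B k).erase i, ballDistSq (lhat k q) (u k - u q)
      = ∑ k ∈ univ.erase i, ∑ q ∈ (B k).erase i, ballDistSq (lhat k q) (x k - x q) :=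
    sum_congr rfl fun k hk => sum_congr rfl fun q hq => by
      rw [huk k hk, huk q (mem_erase.2 ⟨ne_of_mem_erase hq, mem_univ q⟩)]
  change ∑ k, ∑ j ∈ A k, ballDistSq (dhat k j) (u k - a j)
      + (1 / 2) * ∑ k, ∑ q ∈ B k, ballDistSq (lhat k q) (u k - u q) = _
  rw [← add_sum_erase univ _ (mem_univ i), sum_sum_eq_sum_add_sum_erase hBirr hBsymm _ i,
    sum_congr rfl hpair, hfarA, hfarB, hui, ← mul_sum]
  ring

theorem stmt2_general (d n : ℕ) {J : Type*}
    (a : J → EuclideanSpace ℝ (Fin d))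
    (A : Fin n → Finset J) (dhat : Fin n → J → ℝ)
    (B : Fin n → Finset (Fin n)) (lhat : Fin n → Fin n → ℝ)
    (hdhat : ∀ i, ∀ j ∈ A i, 0 ≤ dhat i j)
    (hlhat : ∀ i, ∀ q ∈ B i, 0 ≤ lhat i q)
    (hBirr : ∀ i : Fin n, i ∉ B i)
    (hBsymm : ∀ i q : Fin n, q ∈ B i ↔ i ∈ B q)
    (hlsymm : ∀ i q : Fin n, lhat i q = lhat q i) :
    ∀ (i : Fin n) (x : Fin n → EuclideanSpace ℝ (Fin d)) (y : EuclideanSpace ℝ (Fin d)),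
      ‖blockGrad (obj a A dhat B lhat) i (Function.update x i y)
          - blockGrad (obj a A dhat B lhat) i x‖
        ≤ 4 * (((A i).card : ℝ) + ((B i).card : ℝ)) * ‖y - x i‖ := by
  intro i x y
  obtain ⟨C, hC⟩ := exists_obj_update_eq a A dhat B lhat hBirr hBsymm hlsymm i x
  set gradA := fun z => ∑ j ∈ A i, gradBallDistSq (dhat i j) (z - a j)
  set gradB := fun z => ∑ q ∈ B i, gradBallDistSq (lhat i q) (z - x q)
  have hgrad : ∀ z, gradient (fun w => obj a A dhat B lhat (Function.update x i w)) z
      = gradA z + gradB z := fun z => by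
    simp_rw [hC]
    exact (((hasGradientAt_sum_ballDistSq_sub (hdhat i) a z).add
      (hasGradientAt_sum_ballDistSq_sub (hlhat i) x z)).add_const C).gradient
  simp only [blockGrad, Function.update_idem, Function.update_self]
  rw [hgrad, hgrad, add_sub_add_comm]
  calc _ ≤ ‖gradA y - gradA (x i)‖ + ‖gradB y - gradB (x i)‖ := norm_add_le _ _
    _ ≤ 2 * (A i).card * ‖y - x i‖ + 2 * (B i).card * ‖y - x i‖ :=
        add_le_add (norm_sum_gradBallDistSq_sub_sub_le (hdhat i) a (x i) y)
          (norm_sum_gradBallDistSq_sub_sub_le (hlhat i) x (x i) y)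
    _ ≤ 4 * (((A i).card : ℝ) + ((B i).card : ℝ)) * ‖y - x i‖ := by
        have : 0 ≤ (((A i).card : ℝ) + (B i).card) * ‖y - x i‖ := by positivity
        linarith

theorem stmt2 (d n : ℕ) (hd : 1 ≤ d) (hn : 1 ≤ n) {J : Type*} [Fintype J]
    (a : J → EuclideanSpace ℝ (Fin d))
    (A : Fin n → Finset J) (dhat : Fin n → J → ℝ)
    (B : Fin n → Finset (Fin n)) (lhat : Fin n → Fin n → ℝ)
    (hdhat : ∀ i, ∀ j ∈ A i, 0 ≤ dhat i j)
    (hlhat : ∀ i, ∀ q ∈ B i, 0 ≤ lhat i q)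
    (hBirr : ∀ i : Fin n, i ∉ B i)
    (hBsymm : ∀ i q : Fin n, q ∈ B i ↔ i ∈ B q)
    (hlsymm : ∀ i q : Fin n, lhat i q = lhat q i) :
    ∀ (i : Fin n) (x : Fin n → EuclideanSpace ℝ (Fin d)) (y : EuclideanSpace ℝ (Fin d)),
      ‖blockGrad (obj a A dhat B lhat) i (Function.update x i y)
          - blockGrad (obj a A dhat B lhat) i x‖
        ≤ 4 * (((A i).card : ℝ) + ((B i).card : ℝ)) * ‖y - x i‖ :=
  stmt2_general d n a A dhat B lhat hdhat hlhat hBirr hBsymm hlsymm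
end

section
/- Along any sequence {x^k} generated by the algorithm, the function values are nonincreasing: f(x^k) ≤ f(x^{k−1}) for every k ≥ 1 (indeed f(x^{k,i}) ≤ f(x^{k,i−1}) for every k ≥ 1 and every i ∈ {1,…,n}). -/
open Finset Filter

noncomputable def projBall {d : ℕ} (a : EuclideanSpace ℝ (Fin d)) (r : ℝ)
    (z : EuclideanSpace ℝ (Fin d)) : EuclideanSpace ℝ (Fin d) :=
  if ‖z - a‖ ≤ r then z else a + (r / ‖z - a‖) • (z - a)

/-- The Coop. PPM algorithm: `X (k+1)` is obtained from `X k` by updating the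
blocks successively for `i = 1, …, n`. -/
def IsPPM {d n : ℕ} {J : Type*} (a : J → EuclideanSpace ℝ (Fin d))
    (A : Fin n → Finset J) (dhat : Fin n → J → ℝ)
    (B : Fin n → Finset (Fin n)) (lhat : Fin n → Fin n → ℝ)
    (X : ℕ → Fin n → EuclideanSpace ℝ (Fin d)) : Prop :=
  ∀ (k : ℕ) (i : Fin n),
    X (k + 1) i = (1 / 2 : ℝ) • X k i
      + (1 / (2 * (((A i).card : ℝ) + ((B i).card : ℝ)))) •
        ((∑ j ∈ A i, projBall (a j) (dhat i j) (X k i))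
          + ∑ q ∈ B i, projBall (if q < i then X (k + 1) q else X k q) (lhat i q) (X k i))

/-- The intermediate configuration `x^{k+1, m}`: the first `m` blocks are those of
`X (k+1)` and the remaining blocks are those of `X k`. -/
def interm {d n : ℕ} (X : ℕ → Fin n → EuclideanSpace ℝ (Fin d)) (k m : ℕ) :
    Fin n → EuclideanSpace ℝ (Fin d) :=
  fun t => if (t : ℕ) < m then X (k + 1) t else X k t

/-!
Updating block `i` changes `f` only through the terms involving `x_i`; since every pair term
`(i, q)` occurs twice in the double sum over neighbours, the factor `1/2` makes this change equal
to the change of `ψ(z) = Σ_t dist(z, B(c_t, r_t))²`, the sum running over the `m = |A_i| + |B_i|`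
balls seen from target `i`. At `x` the function `ψ` is majorized by the quadratic
`ψ(x) + 2⟪g, z - x⟫ + m‖z - x‖²`, where `g = Σ_t (x - P_t x)`, because
`dist(z, B_t) ≤ ‖z - P_t x‖`. The PPM update is `z = x - g / (2m)`, at which the majorant equals
`ψ(x) - 3‖g‖² / (4m) ≤ ψ(x)`.
-/

section Projection

variable {d : ℕ}

noncomputable def sqDistBall (a : EuclideanSpace ℝ (Fin d)) (r : ℝ)
    (z : EuclideanSpace ℝ (Fin d)) : ℝ :=
  max (‖z - a‖ - r) 0 ^ 2

lemma norm_projBall_sub_le (a : EuclideanSpace ℝ (Fin d)) {r : ℝ} (hr : 0 ≤ r)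
    (z : EuclideanSpace ℝ (Fin d)) : ‖projBall a r z - a‖ ≤ r := by
  unfold projBall
  split_ifs with h
  · exact h
  · have hN : 0 < ‖z - a‖ := hr.trans_lt (not_le.mp h)
    rw [add_sub_cancel_left, norm_smul, Real.norm_eq_abs,
      abs_of_nonneg (div_nonneg hr hN.le), div_mul_cancel₀ _ hN.ne']

lemma norm_sub_projBall (a : EuclideanSpace ℝ (Fin d)) {r : ℝ} (hr : 0 ≤ r)
    (z : EuclideanSpace ℝ (Fin d)) : ‖z - projBall a r z‖ = max (‖z - a‖ - r) 0 := by
  unfold projBall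
  split_ifs with h
  · simp [max_eq_right (sub_nonpos.mpr h)]
  · have hlt : r < ‖z - a‖ := not_le.mp h
    have hN : 0 < ‖z - a‖ := hr.trans_lt hlt
    have hc : 0 ≤ 1 - r / ‖z - a‖ := sub_nonneg.mpr ((div_lt_one hN).mpr hlt).le
    have he : z - (a + (r / ‖z - a‖) • (z - a)) = (1 - r / ‖z - a‖) • (z - a) := by module
    rw [he, norm_smul, Real.norm_eq_abs, abs_of_nonneg hc, sub_mul, one_mul,
      div_mul_cancel₀ _ hN.ne', max_eq_left (sub_nonneg.mpr hlt.le)]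

lemma sqDistBall_le_majorant (a : EuclideanSpace ℝ (Fin d)) {r : ℝ} (hr : 0 ≤ r)
    (x y : EuclideanSpace ℝ (Fin d)) :
    sqDistBall a r y ≤
      sqDistBall a r x + 2 * inner ℝ (x - projBall a r x) (y - x) + ‖y - x‖ ^ 2 := by
  have hgap : max (‖y - a‖ - r) 0 ≤ ‖y - projBall a r x‖ := by
    refine max_le ?_ (norm_nonneg _)
    linarith [norm_sub_le_norm_sub_add_norm_sub y (projBall a r x) a,
      norm_projBall_sub_le a hr x]
  calc sqDistBall a r y ≤ ‖y - projBall a r x‖ ^ 2 :=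
        pow_le_pow_left₀ (le_max_right _ _) hgap 2
    _ = ‖(x - projBall a r x) + (y - x)‖ ^ 2 := by rw [sub_add_sub_cancel']
    _ = sqDistBall a r x + 2 * inner ℝ (x - projBall a r x) (y - x) + ‖y - x‖ ^ 2 := by
        rw [norm_add_sq_real, norm_sub_projBall a hr x, sqDistBall]

lemma sum_sqDistBall_averagedProjection_le {ι : Type*} (s : Finset ι) (hs : s.Nonempty)
    (c : ι → EuclideanSpace ℝ (Fin d)) (r : ι → ℝ) (hr : ∀ t ∈ s, 0 ≤ r t)
    (x : EuclideanSpace ℝ (Fin d)) :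
    ∑ t ∈ s, sqDistBall (c t) (r t)
        ((1 / 2 : ℝ) • x + (1 / (2 * (#s : ℝ))) • ∑ t ∈ s, projBall (c t) (r t) x) ≤
      ∑ t ∈ s, sqDistBall (c t) (r t) x := by
  set m : ℝ := ((s.card : ℕ) : ℝ)
  have hm : 0 < m := Nat.cast_pos.mpr (card_pos.mpr hs)
  set y := (1 / 2 : ℝ) • x + (1 / (2 * m)) • ∑ t ∈ s, projBall (c t) (r t) x
  set g := ∑ t ∈ s, (x - projBall (c t) (r t) x) with hg_def
  have hstep : y - x = -(1 / (2 * m)) • g := by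
    have hg : g = m • x - ∑ t ∈ s, projBall (c t) (r t) x := by
      rw [hg_def, sum_sub_distrib, sum_const, Nat.cast_smul_eq_nsmul]
    rw [hg, smul_sub, smul_smul, neg_mul, show 1 / (2 * m) * m = 1 / 2 by field_simp]
    module
  have hmajorant : ∑ t ∈ s, sqDistBall (c t) (r t) y ≤
      ∑ t ∈ s, sqDistBall (c t) (r t) x + (2 * inner ℝ g (y - x) + m * ‖y - x‖ ^ 2) := by
    calc ∑ t ∈ s, sqDistBall (c t) (r t) y
        ≤ ∑ t ∈ s, (sqDistBall (c t) (r t) x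
            + 2 * inner ℝ (x - projBall (c t) (r t) x) (y - x) + ‖y - x‖ ^ 2) :=
          sum_le_sum fun t ht => sqDistBall_le_majorant (c t) (hr t ht) x y
      _ = _ := by
          rw [sum_add_distrib, sum_add_distrib, ← mul_sum, ← sum_inner, sum_const,
            nsmul_eq_mul, add_assoc]
  have hdescent : 2 * inner ℝ g (y - x) + m * ‖y - x‖ ^ 2 = -(3 / (4 * m) * ‖g‖ ^ 2) := by
    rw [hstep, real_inner_smul_right, real_inner_self_eq_norm_sq, norm_smul, mul_pow,
      Real.norm_eq_abs, sq_abs]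
    field_simp
    ring
  have : 0 ≤ 3 / (4 * m) * ‖g‖ ^ 2 := by positivity
  linarith

end Projection

section Update

variable {ι E : Type*} [Fintype ι] [DecidableEq ι]

lemma sum_apply_update (G : ι → E → ℝ) (x : ι → E) (i : ι) (z : E) :
    ∑ t, G t (Function.update x i z t) = ∑ t, G t (x t) + (G i z - G i (x i)) := by
  rw [← sub_eq_iff_eq_add', ← sum_sub_distrib,
    sum_eq_single i (fun t _ ht => by simp [Function.update_of_ne ht]) (by simp)]
  simp

lemma sum_sum_neighbors_apply_update (B : ι → Finset ι) (hirr : ∀ i, i ∉ B i)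
    (hsymm : ∀ i q, q ∈ B i ↔ i ∈ B q)
    (φ : ι → ι → E → E → ℝ) (hφ : ∀ t q u v, φ t q u v = φ q t v u)
    (x : ι → E) (i : ι) (z : E) :
    ∑ t, ∑ q ∈ B t, φ t q (Function.update x i z t) (Function.update x i z q) =
      ∑ t, ∑ q ∈ B t, φ t q (x t) (x q) +
        2 * ∑ q ∈ B i, (φ i q z (x q) - φ i q (x i) (x q)) := by
  set y := Function.update x i z
  set D : ι → ι → ℝ := fun t q => φ t q (y t) (y q) - φ t q (x t) (x q)
  have hD : ∀ t, ∀ q ∈ B t, D t q = (if t = i then D t q else 0) + (if q = i then D t q else 0) := by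
    intro t q hq
    by_cases hti : t = i
    · subst hti
      simp [show q ≠ t from fun h => hirr t (h ▸ hq)]
    by_cases hqi : q = i
    · simp [hti, hqi]
    · simp [D, y, hti, hqi, Function.update_of_ne]
  have hDsymm : ∀ t, D t i = D i t := fun t => by simp only [D, hφ t i]
  have hsum : ∑ t, ∑ q ∈ B t, D t q = 2 * ∑ q ∈ B i, D i q := by
    rw [sum_congr rfl fun t _ => sum_congr rfl (hD t)]
    simp only [sum_add_distrib, two_mul]
    congr 1
    · rw [Fintype.sum_eq_single i fun t ht => by simp [ht]]
      simp
    · simp only [sum_ite_eq', hsymm _ i, sum_ite_mem, univ_inter, hDsymm]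
  have hDi : ∀ q ∈ B i, D i q = φ i q z (x q) - φ i q (x i) (x q) := fun q hq => by
    simp [D, y, Function.update_of_ne (show q ≠ i from fun h => hirr i (h ▸ hq))]
  rw [← sum_congr rfl hDi, ← hsum, ← sub_eq_iff_eq_add', ← sum_sub_distrib]
  exact sum_congr rfl fun t _ => (sum_sub_distrib ..).symm

end Update

section Objective

variable {d n : ℕ} {J : Type*} (a : J → EuclideanSpace ℝ (Fin d))
  (A : Fin n → Finset J) (dhat : Fin n → J → ℝ)
  (B : Fin n → Finset (Fin n)) (lhat : Fin n → Fin n → ℝ)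

noncomputable def blockObj (x : Fin n → EuclideanSpace ℝ (Fin d)) (i : Fin n)
    (z : EuclideanSpace ℝ (Fin d)) : ℝ :=
  ∑ j ∈ A i, sqDistBall (a j) (dhat i j) z + ∑ q ∈ B i, sqDistBall (x q) (lhat i q) z

lemma obj_update (hBirr : ∀ i, i ∉ B i) (hBsymm : ∀ i q, q ∈ B i ↔ i ∈ B q)
    (hlsymm : ∀ i q, lhat i q = lhat q i)
    (x : Fin n → EuclideanSpace ℝ (Fin d)) (i : Fin n) (z : EuclideanSpace ℝ (Fin d)) :
    obj a A dhat B lhat (Function.update x i z) =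
      obj a A dhat B lhat x +
        (blockObj a A dhat B lhat x i z - blockObj a A dhat B lhat x i (x i)) := by
  have hA := sum_apply_update (fun t u => ∑ j ∈ A t, sqDistBall (a j) (dhat t j) u) x i z
  have hB := sum_sum_neighbors_apply_update B hBirr hBsymm
    (fun t q u v => sqDistBall v (lhat t q) u)
    (fun t q u v => by simp only [sqDistBall, norm_sub_rev u v, hlsymm t q]) x i z
  simp only [sqDistBall] at hA hB
  simp only [obj, blockObj, sqDistBall, hA, hB, sum_sub_distrib]
  ring

lemma blockObj_averagedProjection_le (hdhat : ∀ i, ∀ j ∈ A i, 0 ≤ dhat i j)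
    (hlhat : ∀ i, ∀ q ∈ B i, 0 ≤ lhat i q) (x : Fin n → EuclideanSpace ℝ (Fin d))
    (i : Fin n) (hcard : 1 ≤ #(A i) + #(B i)) (z : EuclideanSpace ℝ (Fin d)) :
    blockObj a A dhat B lhat x i
        ((1 / 2 : ℝ) • z + (1 / (2 * ((#(A i) : ℝ) + (#(B i) : ℝ)))) •
          ((∑ j ∈ A i, projBall (a j) (dhat i j) z) + ∑ q ∈ B i, projBall (x q) (lhat i q) z)) ≤
      blockObj a A dhat B lhat x i z := by
  have hs : ((A i).disjSum (B i)).Nonempty := by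
    rw [← card_pos, card_disjSum]
    omega
  have hr : ∀ t ∈ (A i).disjSum (B i), 0 ≤ Sum.elim (dhat i) (lhat i) t := by
    rintro (j | q) ht
    · exact hdhat i j (inl_mem_disjSum.mp ht)
    · exact hlhat i q (inr_mem_disjSum.mp ht)
  simpa [blockObj, sum_disjSum, card_disjSum] using
    sum_sqDistBall_averagedProjection_le _ hs (Sum.elim a x) _ hr z

end Objective

section Sweep

variable {d n : ℕ} (X : ℕ → Fin n → EuclideanSpace ℝ (Fin d)) (k : ℕ)

lemma interm_zero : interm X k 0 = X k := by
  funext t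
  simp [interm]

lemma interm_of_le {m : ℕ} (hm : n ≤ m) : interm X k m = X (k + 1) := by
  funext t
  simp [interm, t.isLt.trans_le hm]

lemma interm_succ (i : Fin n) :
    interm X k (i + 1) = Function.update (interm X k i) i (X (k + 1) i) := by
  funext t
  rcases eq_or_ne t i with rfl | hti
  · simp [interm]
  · have : (t : ℕ) ≠ i := Fin.val_ne_of_ne hti
    simp only [interm, Function.update_of_ne hti, Nat.lt_add_one_iff_lt_or_eq, this, or_false]

end Sweep

lemma IsPPM.obj_interm_succ_le {d n : ℕ} {J : Type*} {a : J → EuclideanSpace ℝ (Fin d)}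
    {A : Fin n → Finset J} {dhat : Fin n → J → ℝ}
    {B : Fin n → Finset (Fin n)} {lhat : Fin n → Fin n → ℝ}
    {X : ℕ → Fin n → EuclideanSpace ℝ (Fin d)} (hX : IsPPM a A dhat B lhat X)
    (hdhat : ∀ i, ∀ j ∈ A i, 0 ≤ dhat i j) (hlhat : ∀ i, ∀ q ∈ B i, 0 ≤ lhat i q)
    (hBirr : ∀ i, i ∉ B i) (hBsymm : ∀ i q, q ∈ B i ↔ i ∈ B q)
    (hlsymm : ∀ i q, lhat i q = lhat q i) (hcard : ∀ i, 1 ≤ #(A i) + #(B i))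
    (k : ℕ) (i : Fin n) :
    obj a A dhat B lhat (interm X k (i + 1)) ≤ obj a A dhat B lhat (interm X k i) := by
  set x := interm X k i
  have hxi : x i = X k i := by simp [x, interm]
  have hstep : X (k + 1) i = (1 / 2 : ℝ) • x i + (1 / (2 * ((#(A i) : ℝ) + (#(B i) : ℝ)))) •
      ((∑ j ∈ A i, projBall (a j) (dhat i j) (x i)) + ∑ q ∈ B i, projBall (x q) (lhat i q) (x i)) := by
    simp only [hX k i, hxi, x, interm, Fin.lt_def]
  rw [interm_succ, obj_update a A dhat B lhat hBirr hBsymm hlsymm, hstep,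
    add_le_iff_nonpos_right, sub_nonpos]
  exact blockObj_averagedProjection_le a A dhat B lhat hdhat hlhat x i (hcard i) (x i)

theorem stmt6_general (d n : ℕ) {J : Type*}
    (a : J → EuclideanSpace ℝ (Fin d))
    (A : Fin n → Finset J) (dhat : Fin n → J → ℝ)
    (B : Fin n → Finset (Fin n)) (lhat : Fin n → Fin n → ℝ)
    (hdhat : ∀ i, ∀ j ∈ A i, 0 ≤ dhat i j)
    (hlhat : ∀ i, ∀ q ∈ B i, 0 ≤ lhat i q)
    (hBirr : ∀ i : Fin n, i ∉ B i)
    (hBsymm : ∀ i q : Fin n, q ∈ B i ↔ i ∈ B q)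
    (hlsymm : ∀ i q : Fin n, lhat i q = lhat q i)
    (hcard : ∀ i : Fin n, 1 ≤ (A i).card + (B i).card)
    (X : ℕ → Fin n → EuclideanSpace ℝ (Fin d))
    (hX : IsPPM a A dhat B lhat X) :
    (∀ k : ℕ, obj a A dhat B lhat (X (k + 1)) ≤ obj a A dhat B lhat (X k)) ∧
    (∀ (k : ℕ) (i : Fin n),
      obj a A dhat B lhat (interm X k ((i : ℕ) + 1)) ≤ obj a A dhat B lhat (interm X k (i : ℕ))) := by
  have hblock := hX.obj_interm_succ_le hdhat hlhat hBirr hBsymm hlsymm hcard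
  refine ⟨fun k => ?_, hblock⟩
  have hsweep : Antitone fun m => obj a A dhat B lhat (interm X k m) := by
    refine antitone_nat_of_succ_le fun m => ?_
    rcases lt_or_ge m n with hm | hm
    · exact hblock k ⟨m, hm⟩
    · rw [interm_of_le X k hm, interm_of_le X k (hm.trans m.le_succ)]
  simpa only [interm_zero, interm_of_le X k le_rfl] using hsweep (Nat.zero_le n)

theorem stmt6 (d n : ℕ) (hd : 1 ≤ d) (hn : 1 ≤ n) {J : Type*} [Fintype J]
    (a : J → EuclideanSpace ℝ (Fin d))
    (A : Fin n → Finset J) (dhat : Fin n → J → ℝ)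
    (B : Fin n → Finset (Fin n)) (lhat : Fin n → Fin n → ℝ)
    (hdhat : ∀ i, ∀ j ∈ A i, 0 ≤ dhat i j)
    (hlhat : ∀ i, ∀ q ∈ B i, 0 ≤ lhat i q)
    (hBirr : ∀ i : Fin n, i ∉ B i)
    (hBsymm : ∀ i q : Fin n, q ∈ B i ↔ i ∈ B q)
    (hlsymm : ∀ i q : Fin n, lhat i q = lhat q i)
    (hcard : ∀ i : Fin n, 1 ≤ (A i).card + (B i).card)
    (X : ℕ → Fin n → EuclideanSpace ℝ (Fin d))
    (hX : IsPPM a A dhat B lhat X) :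
    (∀ k : ℕ, obj a A dhat B lhat (X (k + 1)) ≤ obj a A dhat B lhat (X k)) ∧
    (∀ (k : ℕ) (i : Fin n),
      obj a A dhat B lhat (interm X k ((i : ℕ) + 1)) ≤ obj a A dhat B lhat (interm X k (i : ℕ))) :=
  stmt6_general d n a A dhat B lhat hdhat hlhat hBirr hBsymm hlsymm hcard X hX
end
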